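/- If each summand has law bounded below by Lebesgue measure on [b_m,b_M] (0 < b_m < b_M), then the n-fold convolution (λ|_{[b_m,b_M]})^{⊗n} admits a positive continuous density on the open interval (n b_m, n b_M); in particular there exist n ≥ 1, c > 0 and d > b_M such that (λ|_{[b_m,b_M]})^{⊗n} ≥ c λ|_{[d−b_M, d+b_m]}. -/

import Mathlib

open MeasureTheory Set
open scoped ENNReal

namespace ConvPowAux

variable (bm bM : ℝ)

noncomputable def mu (n : ℕ) : Measure ℝ :=
  Measure.map (fun x : Fin n → ℝ => ∑ i, x i)
    (Measure.pi fun _ : Fin n => volume.restrict (Icc bm bM))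

lemma measurable_finSum (n : ℕ) : Measurable (fun x : Fin n → ℝ => ∑ i, x i) :=
  Finset.measurable_sum _ fun i _ => measurable_pi_apply i

lemma mu_apply (n : ℕ) {B : Set ℝ} (hB : MeasurableSet B) :
    mu bm bM n B = (Measure.pi fun _ : Fin n => volume.restrict (Icc bm bM))
      ((fun x : Fin n → ℝ => ∑ i, x i) ⁻¹' B) :=
  Measure.map_apply (measurable_finSum n) hB

lemma mu_univ (n : ℕ) : mu bm bM n univ = (ENNReal.ofReal (bM - bm)) ^ n := by
  rw [mu_apply _ _ n MeasurableSet.univ, preimage_univ, Measure.pi_univ]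
  simp [Real.volume_Icc]

instance (n : ℕ) : IsFiniteMeasure (mu bm bM n) :=
  ⟨by rw [mu_univ]; exact ENNReal.pow_lt_top ENNReal.ofReal_lt_top⟩

lemma mu_zero : mu bm bM 0 = Measure.dirac 0 := by
  rw [mu, Measure.pi_of_empty, Measure.map_dirac' (measurable_finSum 0)]
  simp

lemma mu_succ (n : ℕ) {B : Set ℝ} (hB : MeasurableSet B) :
    mu bm bM (n + 1) B = ∫⁻ t in B, mu bm bM n (Icc (t - bM) (t - bm)) := by
  set ν : Measure ℝ := volume.restrict (Icc bm bM) with hν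
  -- step 1: express mu (n+1) as pushforward of a product
  have e := MeasurableEquiv.piFinSuccAbove (fun _ : Fin (n + 1) => ℝ) 0
  have h1 : mu bm bM (n + 1)
      = Measure.map (fun p : ℝ × (Fin n → ℝ) => p.1 + ∑ i, p.2 i)
        (ν.prod (Measure.pi fun _ : Fin n => ν)) := by
    have hmp := measurePreserving_piFinSuccAbove (fun _ : Fin (n + 1) => ν) 0
    have hcomp : (fun x : Fin (n + 1) → ℝ => ∑ i, x i)
        = (fun p : ℝ × (Fin n → ℝ) => p.1 + ∑ i, p.2 i)
          ∘ (MeasurableEquiv.piFinSuccAbove (fun _ : Fin (n + 1) => ℝ) 0) := by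
      ext x
      simp [MeasurableEquiv.piFinSuccAbove, Fin.sum_univ_succAbove (fun i => x i) 0, Fin.tail]
    have hg : Measurable (fun p : ℝ × (Fin n → ℝ) => p.1 + ∑ i, p.2 i) :=
      measurable_fst.add ((measurable_finSum n).comp measurable_snd)
    rw [mu, hcomp,
      ← Measure.map_map hg (MeasurableEquiv.piFinSuccAbove (fun _ : Fin (n + 1) => ℝ) 0).measurable,
      hmp.map_eq]
  have h2 : mu bm bM (n + 1)
      = Measure.map (fun q : ℝ × ℝ => q.1 + q.2) (ν.prod (mu bm bM n)) := by
    rw [h1, mu]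
    have : (fun p : ℝ × (Fin n → ℝ) => p.1 + ∑ i, p.2 i)
        = (fun q : ℝ × ℝ => q.1 + q.2) ∘ (Prod.map id (fun y : Fin n → ℝ => ∑ i, y i)) := rfl
    rw [this, ← Measure.map_map measurable_add (measurable_id.prodMap (measurable_finSum n)),
      ← Measure.map_prod_map _ _ measurable_id (measurable_finSum n), Measure.map_id]
  rw [h2, Measure.map_apply measurable_add hB,
    Measure.prod_apply_symm (measurable_add hB)]
  -- inner measure computation
  have hinner : ∀ y : ℝ, ν ((fun x => (x, y)) ⁻¹' ((fun q : ℝ × ℝ => q.1 + q.2) ⁻¹' B))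
      = volume (B ∩ Icc (bm + y) (bM + y)) := by
    intro y
    have hset : ((fun x => (x, y)) ⁻¹' ((fun q : ℝ × ℝ => q.1 + q.2) ⁻¹' B)) ∩ Icc bm bM
        = (fun x => x + y) ⁻¹' (B ∩ Icc (bm + y) (bM + y)) := by
      ext x
      simp only [mem_inter_iff, mem_preimage, mem_Icc]
      constructor
      · rintro ⟨h1, h2, h3⟩; exact ⟨h1, by linarith, by linarith⟩
      · rintro ⟨h1, h2, h3⟩; exact ⟨h1, by linarith, by linarith⟩
    rw [hν, Measure.restrict_apply (measurable_prodMk_right (measurable_add hB)), hset,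
      measure_preimage_add_right]
  simp only [hinner]
  -- rewrite as a double integral of an indicator and swap
  have hF : Measurable (fun p : ℝ × ℝ => if p.2 - bM ≤ p.1 ∧ p.1 ≤ p.2 - bm then (1 : ℝ≥0∞) else 0) := by
    refine Measurable.ite ?_ measurable_const measurable_const
    exact ((measurableSet_le (measurable_snd.sub measurable_const) measurable_fst).inter
      (measurableSet_le measurable_fst (measurable_snd.sub measurable_const)))
  have hvol : ∀ y : ℝ, volume (B ∩ Icc (bm + y) (bM + y))
      = ∫⁻ t in B, (if t - bM ≤ y ∧ y ≤ t - bm then (1 : ℝ≥0∞) else 0) := by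
    intro y
    rw [inter_comm, ← Measure.restrict_apply' hB]
    rw [← lintegral_indicator_one (measurableSet_Icc : MeasurableSet (Icc (bm + y) (bM + y)))]
    refine lintegral_congr fun t => ?_
    by_cases h : t ∈ Icc (bm + y) (bM + y)
    · rw [indicator_of_mem h]
      simp only [mem_Icc] at h
      rw [if_pos ⟨by linarith [h.2], by linarith [h.1]⟩]; rfl
    · rw [indicator_of_notMem h]
      simp only [mem_Icc, not_and_or, not_le] at h
      rw [if_neg]
      rintro ⟨h1, h2⟩
      rcases h with h | h <;> linarith
  simp only [hvol]
  rw [lintegral_lintegral_swap (hF.aemeasurable)]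
  refine lintegral_congr fun t => ?_
  rw [← lintegral_indicator_one (measurableSet_Icc : MeasurableSet (Icc (t - bM) (t - bm)))]
  refine lintegral_congr fun y => ?_
  by_cases h : y ∈ Icc (t - bM) (t - bm)
  · rw [if_pos (mem_Icc.mp h), indicator_of_mem h]; rfl
  · rw [if_neg (by simpa [mem_Icc] using h), indicator_of_notMem h]


noncomputable def rho (n : ℕ) (t : ℝ) : ℝ :=
  (mu bm bM (n - 1) (Icc (t - bM) (t - bm))).toReal

lemma ofReal_rho (m : ℕ) (t : ℝ) :
    ENNReal.ofReal (rho bm bM (m + 1) t) = mu bm bM m (Icc (t - bM) (t - bm)) := by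
  simp only [rho, Nat.add_sub_cancel]
  exact ENNReal.ofReal_toReal (measure_ne_top _ _)

lemma mu_density (m : ℕ) {B : Set ℝ} (hB : MeasurableSet B) :
    mu bm bM (m + 1) B = ∫⁻ t in B, ENNReal.ofReal (rho bm bM (m + 1) t) := by
  rw [mu_succ bm bM m hB]
  exact lintegral_congr fun t => (ofReal_rho bm bM m t).symm

lemma mu_le_vol (m : ℕ) {A : Set ℝ} (hA : MeasurableSet A) :
    mu bm bM (m + 1) A ≤ mu bm bM m univ * volume A := by
  rw [mu_succ bm bM m hA]
  calc ∫⁻ t in A, mu bm bM m (Icc (t - bM) (t - bm))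
      ≤ ∫⁻ _ in A, mu bm bM m univ := lintegral_mono fun t => measure_mono (subset_univ _)
    _ = mu bm bM m univ * volume A := setLIntegral_const A _

lemma rho_one_eq (t : ℝ) : rho bm bM 1 t = (Icc bm bM).indicator (fun _ => (1:ℝ)) t := by
  simp only [rho, Nat.sub_self, mu_zero]
  rw [Measure.dirac_apply' _ measurableSet_Icc]
  have hiff : (0:ℝ) ∈ Icc (t - bM) (t - bm) ↔ t ∈ Icc bm bM := by
    simp only [mem_Icc]; constructor <;> intro h <;> constructor <;> linarith [h.1, h.2]
  by_cases h : t ∈ Icc bm bM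
  · rw [indicator_of_mem (hiff.mpr h), indicator_of_mem h]; simp
  · rw [indicator_of_notMem (fun hc => h (hiff.mp hc)), indicator_of_notMem h]; simp

lemma rho_cont (m : ℕ) : Continuous (rho bm bM (m + 2)) := by
  set C : ℝ := (mu bm bM m univ).toReal with hC
  have hC0 : 0 ≤ C := ENNReal.toReal_nonneg
  have key : ∀ s t : ℝ, rho bm bM (m + 2) t ≤ rho bm bM (m + 2) s + C * (2 * |t - s|) := by
    intro s t
    have hsub : Icc (t - bM) (t - bm) \ Icc (s - bM) (s - bm) ⊆
        Ico (t - bM) (s - bM) ∪ Ioc (s - bm) (t - bm) := by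
      rintro x ⟨hx1, hx2⟩
      simp only [mem_Icc] at hx1
      simp only [mem_Icc, not_and_or, not_le] at hx2
      rcases hx2 with h | h
      · exact Or.inl ⟨hx1.1, by linarith⟩
      · exact Or.inr ⟨h, hx1.2⟩
    have hdm : MeasurableSet (Icc (t - bM) (t - bm) \ Icc (s - bM) (s - bm)) :=
      measurableSet_Icc.diff measurableSet_Icc
    have hvol : volume (Icc (t - bM) (t - bm) \ Icc (s - bM) (s - bm))
        ≤ ENNReal.ofReal (2 * |t - s|) := by
      refine le_trans (measure_mono hsub) (le_trans (measure_union_le _ _) ?_)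
      rw [Real.volume_Ico, Real.volume_Ioc]
      have h1 : s - bM - (t - bM) ≤ |t - s| := by
        rw [abs_sub_comm]; have := le_abs_self (s - t); linarith
      have h2 : t - bm - (s - bm) ≤ |t - s| := by
        have := le_abs_self (t - s); linarith
      calc ENNReal.ofReal (s - bM - (t - bM)) + ENNReal.ofReal (t - bm - (s - bm))
          ≤ ENNReal.ofReal |t - s| + ENNReal.ofReal |t - s| :=
            add_le_add (ENNReal.ofReal_le_ofReal h1) (ENNReal.ofReal_le_ofReal h2)
        _ = ENNReal.ofReal (2 * |t - s|) := by
            rw [← ENNReal.ofReal_add (abs_nonneg _) (abs_nonneg _), two_mul]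
    have hmeas : mu bm bM (m + 1) (Icc (t - bM) (t - bm))
        ≤ mu bm bM (m + 1) (Icc (s - bM) (s - bm))
          + mu bm bM m univ * ENNReal.ofReal (2 * |t - s|) := by
      calc mu bm bM (m + 1) (Icc (t - bM) (t - bm))
          ≤ mu bm bM (m + 1) (Icc (s - bM) (s - bm))
            + mu bm bM (m + 1) (Icc (t - bM) (t - bm) \ Icc (s - bM) (s - bm)) := by
            refine le_trans (measure_mono ?_) (measure_union_le _ _)
            intro x hx
            by_cases h : x ∈ Icc (s - bM) (s - bm)
            · exact Or.inl h
            · exact Or.inr ⟨hx, h⟩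
        _ ≤ mu bm bM (m + 1) (Icc (s - bM) (s - bm))
            + mu bm bM m univ * ENNReal.ofReal (2 * |t - s|) := by
            refine add_le_add le_rfl (le_trans (mu_le_vol bm bM m hdm) ?_)
            exact mul_le_mul_right hvol _
    have hne1 : mu bm bM (m + 1) (Icc (s - bM) (s - bm)) ≠ ⊤ := measure_ne_top _ _
    have hne2 : mu bm bM m univ * ENNReal.ofReal (2 * |t - s|) ≠ ⊤ :=
      ENNReal.mul_ne_top (measure_ne_top _ _) ENNReal.ofReal_ne_top
    have := ENNReal.toReal_mono (by exact ENNReal.add_ne_top.mpr ⟨hne1, hne2⟩) hmeas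
    rw [ENNReal.toReal_add hne1 hne2, ENNReal.toReal_mul,
      ENNReal.toReal_ofReal (by positivity)] at this
    simpa [rho, Nat.add_sub_cancel] using this
  have hlip : LipschitzWith (Real.toNNReal (2 * C)) (rho bm bM (m + 2)) := by
    refine LipschitzWith.of_dist_le_mul fun t s => ?_
    rw [Real.dist_eq, Real.dist_eq, Real.coe_toNNReal _ (by positivity), abs_sub_le_iff]
    constructor
    · have := key s t; linarith
    · have h := key t s
      rw [abs_sub_comm] at h
      linarith
  exact hlip.continuous

lemma rho_measurable (n : ℕ) : Measurable (rho bm bM (n + 1)) := by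
  cases n with
  | zero =>
    rw [show rho bm bM 1 = (Icc bm bM).indicator (fun _ => (1:ℝ)) from
      funext (rho_one_eq bm bM)]
    exact measurable_const.indicator measurableSet_Icc
  | succ m => exact (rho_cont bm bM m).measurable

lemma rho_pos (hbm : 0 < bm) (hbmM : bm < bM) :
    ∀ n : ℕ, ∀ t ∈ Ioo (((n : ℝ) + 1) * bm) (((n : ℝ) + 1) * bM), 0 < rho bm bM (n + 1) t := by
  intro n
  induction n with
  | zero =>
    intro t ht
    simp only [Nat.cast_zero, zero_add, one_mul] at ht
    rw [rho_one_eq, indicator_of_mem (mem_Icc.mpr ⟨ht.1.le, ht.2.le⟩)]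
    norm_num
  | succ n ih =>
    intro t ht
    obtain ⟨ht1, ht2⟩ := ht
    push_cast at ht1 ht2
    set a : ℝ := max (t - bM) (((n : ℝ) + 1) * bm) with ha
    set b : ℝ := min (t - bm) (((n : ℝ) + 1) * bM) with hb
    have hab : a < b := by
      rw [ha, hb]
      rw [max_lt_iff]
      constructor <;> rw [lt_min_iff] <;> constructor <;> nlinarith [hbm, hbmM]
    have hIoo : Ioo a b ⊆ Icc (t - bM) (t - bm) := fun x hx =>
      ⟨le_of_lt (lt_of_le_of_lt (le_max_left _ _) hx.1),
       le_of_lt (lt_of_lt_of_le hx.2 (min_le_left _ _))⟩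
    have hIoo2 : Ioo a b ⊆ Ioo (((n : ℝ) + 1) * bm) (((n : ℝ) + 1) * bM) := fun x hx =>
      ⟨lt_of_le_of_lt (le_max_right _ _) hx.1, lt_of_lt_of_le hx.2 (min_le_right _ _)⟩
    have hmeasf : Measurable fun s => ENNReal.ofReal (rho bm bM (n + 1) s) :=
      (rho_measurable bm bM n).ennreal_ofReal
    have hpos : 0 < mu bm bM (n + 1) (Ioo a b) := by
      rw [mu_density bm bM n measurableSet_Ioo, pos_iff_ne_zero]
      intro h0
      have hae := (lintegral_eq_zero_iff hmeasf).mp h0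
      have h2 : ∀ᵐ s ∂(volume : Measure ℝ), s ∉ Ioo a b := by
        filter_upwards [(ae_restrict_iff' measurableSet_Ioo).mp hae] with s hs hmem
        have hrpos := ih s (hIoo2 hmem)
        have hz := hs hmem
        rw [Pi.zero_apply, ENNReal.ofReal_eq_zero] at hz
        linarith
      have h3 := ae_iff.mp h2
      simp only [not_not, setOf_mem_eq, Real.volume_Ioo, ENNReal.ofReal_eq_zero] at h3
      linarith
    have hfin : mu bm bM (n + 1) (Icc (t - bM) (t - bm)) ≠ ⊤ := measure_ne_top _ _
    have : 0 < mu bm bM (n + 1) (Icc (t - bM) (t - bm)) :=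
      lt_of_lt_of_le hpos (measure_mono hIoo)
    simp only [rho, Nat.add_sub_cancel]
    exact ENNReal.toReal_pos this.ne' hfin

lemma rho_contOn (hbmM : bm < bM) (m : ℕ) :
    ContinuousOn (rho bm bM (m + 1)) (Ioo (((m : ℝ) + 1) * bm) (((m : ℝ) + 1) * bM)) := by
  cases m with
  | zero =>
    refine (continuousOn_const (c := (1:ℝ))).congr fun x hx => ?_
    simp only [Nat.cast_zero, zero_add, one_mul] at hx
    rw [rho_one_eq, indicator_of_mem (mem_Icc.mpr ⟨hx.1.le, hx.2.le⟩)]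
  | succ k => exact (rho_cont bm bM k).continuousOn

end ConvPowAux



/-- The `n`-fold convolution of Lebesgue measure restricted to `[b_m, b_M]` (`0 < b_m < b_M`)
admits a positive continuous density on the open interval `(n b_m, n b_M)`; in particular
there exist `n ≥ 1`, `c > 0` and `d > b_M` such that
`(λ|_{[b_m,b_M]})^{⊗n} ≥ c λ|_{[d−b_M, d+b_m]}`. -/
theorem convolution_power_density (bm bM : ℝ) (hbm : 0 < bm) (hbmM : bm < bM) :
    (∀ n : ℕ, 1 ≤ n →
      ∃ ρ : ℝ → ℝ,
        ContinuousOn ρ (Ioo ((n : ℝ) * bm) ((n : ℝ) * bM)) ∧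
        (∀ x ∈ Ioo ((n : ℝ) * bm) ((n : ℝ) * bM), 0 < ρ x) ∧
        (∀ B : Set ℝ, MeasurableSet B → B ⊆ Ioo ((n : ℝ) * bm) ((n : ℝ) * bM) →
          Measure.map (fun x : Fin n → ℝ => ∑ i, x i)
              (Measure.pi fun _ : Fin n => volume.restrict (Icc bm bM)) B
            = ∫⁻ x in B, ENNReal.ofReal (ρ x))) ∧
    ∃ n : ℕ, 1 ≤ n ∧ ∃ c > (0:ℝ), ∃ d > bM,
      ∀ B : Set ℝ, MeasurableSet B →
        Measure.map (fun x : Fin n → ℝ => ∑ i, x i)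
            (Measure.pi fun _ : Fin n => volume.restrict (Icc bm bM)) B
          ≥ ENNReal.ofReal c * volume (B ∩ Icc (d - bM) (d + bm)) := by
  constructor
  · intro n hn
    obtain ⟨m, rfl⟩ : ∃ m, n = m + 1 := ⟨n - 1, (Nat.succ_pred_eq_of_pos hn).symm⟩
    refine ⟨ConvPowAux.rho bm bM (m + 1), ?_, ?_, ?_⟩
    · have := ConvPowAux.rho_contOn bm bM hbmM m
      push_cast
      exact this
    · intro x hx
      refine ConvPowAux.rho_pos bm bM hbm hbmM m x ?_
      push_cast at hx ⊢
      exact hx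
    · intro B hB _
      exact ConvPowAux.mu_density bm bM m hB
  · obtain ⟨n, hngt⟩ := exists_nat_gt ((bm + bM) / (bM - bm))
    have hbMm : 0 < bM - bm := by linarith
    have hkey : bm + bM < (n : ℝ) * (bM - bm) := by
      rw [div_lt_iff₀ hbMm] at hngt; nlinarith
    have hn1 : 1 ≤ n := by
      by_contra h
      push_neg at h
      interval_cases n
      simp at hkey; linarith
    have hn0 : (0:ℝ) ≤ (n : ℝ) := Nat.cast_nonneg n
    obtain ⟨ε, hε⟩ : ∃ ε : ℝ, ε = (n : ℝ) * (bM - bm) - (bm + bM) := ⟨_, rfl⟩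
    have hε0 : 0 < ε := by rw [hε]; linarith
    obtain ⟨d, hd⟩ : ∃ d : ℝ, d = (n : ℝ) * bm + bM + ε / 2 := ⟨_, rfl⟩
    have hd1 : bM < d := by rw [hd]; nlinarith [mul_nonneg hn0 hbm.le]
    have hmul : (n : ℝ) * (bM - bm) = (n : ℝ) * bM - (n : ℝ) * bm := by ring
    have hsub : Icc (d - bM) (d + bm) ⊆ Ioo ((n : ℝ) * bm) ((n : ℝ) * bM) := by
      intro x hx
      rw [mem_Icc] at hx
      rw [hd] at hx
      rw [hε] at hx
      constructor
      · nlinarith [hx.1]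
      · nlinarith [hx.2]
    obtain ⟨m, rfl⟩ : ∃ m, n = m + 1 := ⟨n - 1, (Nat.succ_pred_eq_of_pos hn1).symm⟩
    have hcont : ContinuousOn (ConvPowAux.rho bm bM (m + 1)) (Icc (d - bM) (d + bm)) := by
      refine (ConvPowAux.rho_contOn bm bM hbmM m).mono ?_
      push_cast at hsub ⊢
      exact hsub
    have hne : (Icc (d - bM) (d + bm)).Nonempty :=
      ⟨d, mem_Icc.mpr ⟨by linarith, by linarith⟩⟩
    obtain ⟨x0, hx0, hmin⟩ := isCompact_Icc.exists_isMinOn hne hcont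
    refine ⟨m + 1, hn1, ConvPowAux.rho bm bM (m + 1) x0, ?_, d, hd1, ?_⟩
    · refine ConvPowAux.rho_pos bm bM hbm hbmM m x0 ?_
      have := hsub hx0
      push_cast at this ⊢
      exact this
    · intro B hB
      have hBK : MeasurableSet (B ∩ Icc (d - bM) (d + bm)) := hB.inter measurableSet_Icc
      calc ENNReal.ofReal (ConvPowAux.rho bm bM (m + 1) x0)
            * volume (B ∩ Icc (d - bM) (d + bm))
          = ∫⁻ _ in B ∩ Icc (d - bM) (d + bm),
              ENNReal.ofReal (ConvPowAux.rho bm bM (m + 1) x0) :=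
            (setLIntegral_const _ _).symm
        _ ≤ ∫⁻ t in B ∩ Icc (d - bM) (d + bm),
              ENNReal.ofReal (ConvPowAux.rho bm bM (m + 1) t) :=
            setLIntegral_mono (ConvPowAux.rho_measurable bm bM m).ennreal_ofReal
              fun x hx => ENNReal.ofReal_le_ofReal (hmin hx.2)
        _ = ConvPowAux.mu bm bM (m + 1) (B ∩ Icc (d - bM) (d + bm)) :=
            (ConvPowAux.mu_density bm bM m hBK).symm
        _ ≤ ConvPowAux.mu bm bM (m + 1) B := measure_mono inter_subset_left
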